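/- arXiv:1905.04300 — 2 statements merged into one kernel-verified Lean document; each statement's English description precedes it below -/
import Mathlib

section
/- Let $0<\alpha<2$ and $n\geq 2$. If $\bar u:[0,\infty)\to[0,\infty)$ is a measurable nonnegative function satisfying $\int_1^{\infty} \bar u(r)/r^{1+\alpha}\,dr < \infty$, then for every $\delta>0$ the double integral $\int_1^{\infty} R^{-(1+\alpha+\delta)} \int_R^{\infty} \frac{R^{\alpha}\,\bar u(r)}{r\,(r^2-R^2)^{\alpha/2}}\,dr\,dR$ is finite. -/
/-!
By Tonelli the order of integration can be swapped, so that for each `r > 1` one integrates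
`R ^ (-(1 + δ)) * (r ^ 2 / (r ^ 2 - R ^ 2)) ^ (α / 2)` over `1 < R < r` against the weight
`u r / r ^ (1 + α)`. This inner integral is bounded uniformly in `r`: for `R ≤ r / 2` the
ratio is at most `4 / 3`, leaving the integrable tail `R ^ (-(1 + δ))`, while for `R > r / 2`
the integrand is at most `2 * r ^ (α / 2 - 1) * (r - R) ^ (-(α / 2))`, a singularity that is
integrable because `α < 2` and whose integral over `(0, r)` does not depend on `r`.
-/

open MeasureTheory Set

theorem setLIntegral_Ioi_setLIntegral_Ioi_swap {f : ℝ → ℝ → ENNReal}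
    (hf : Measurable (Function.uncurry f)) (a : ℝ) :
    ∫⁻ x in Ioi a, ∫⁻ y in Ioi x, f x y = ∫⁻ y in Ioi a, ∫⁻ x in Ioo a y, f x y := by
  let g : ℝ → ℝ → ENNReal := fun x y => if x < y then f x y else 0
  have hg : Measurable (Function.uncurry g) :=
    Measurable.ite (measurableSet_lt measurable_fst measurable_snd) hf measurable_const
  calc ∫⁻ x in Ioi a, ∫⁻ y in Ioi x, f x y = ∫⁻ x in Ioi a, ∫⁻ y in Ioi a, g x y := by
        refine setLIntegral_congr_fun measurableSet_Ioi fun x hx => ?_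
        have hg_ind : g x = (Ioi x).indicator (f x) := by
          ext y; simp [g, indicator_apply]
        rw [hg_ind, lintegral_indicator measurableSet_Ioi,
          Measure.restrict_restrict measurableSet_Ioi,
          inter_eq_self_of_subset_left (Ioi_subset_Ioi (le_of_lt hx))]
    _ = ∫⁻ y in Ioi a, ∫⁻ x in Ioi a, g x y := lintegral_lintegral_swap hg.aemeasurable
    _ = ∫⁻ y in Ioi a, ∫⁻ x in Ioo a y, f x y := by
        refine setLIntegral_congr_fun measurableSet_Ioi fun y _ => ?_
        have hg_ind : (fun x => g x y) = (Iio y).indicator (fun x => f x y) := by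
          ext x; simp [g, indicator_apply]
        rw [hg_ind, lintegral_indicator measurableSet_Iio,
          Measure.restrict_restrict measurableSet_Iio,
          inter_comm, Ioi_inter_Iio]

theorem rpow_neg_mul_ratio_rpow_le {β δ R r : ℝ} (hβ : 0 ≤ β) (hδ : 0 ≤ δ) (hR : 1 ≤ R)
    (hRr : R < r) :
    R ^ (-(1 + δ)) * (r ^ 2 / (r ^ 2 - R ^ 2)) ^ β
      ≤ (4 / 3) ^ β * R ^ (-(1 + δ)) + 2 * r ^ (β - 1) * (r - R) ^ (-β) := by
  have hR0 : 0 < R := by linarith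
  have hr0 : 0 < r := by linarith
  have hgap : 0 < r ^ 2 - R ^ 2 := by nlinarith
  rcases le_or_gt R (r / 2) with hnear | hfar
  · have hratio : r ^ 2 / (r ^ 2 - R ^ 2) ≤ 4 / 3 := by
      rw [div_le_iff₀ hgap]; nlinarith
    calc R ^ (-(1 + δ)) * (r ^ 2 / (r ^ 2 - R ^ 2)) ^ β ≤ R ^ (-(1 + δ)) * (4 / 3) ^ β := by
          gcongr
      _ ≤ _ := by
          rw [mul_comm]
          have : 0 ≤ 2 * r ^ (β - 1) * (r - R) ^ (-β) := by
            have : 0 ≤ r - R := by linarith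
            positivity
          linarith
  · have hpow : R ^ (-(1 + δ)) ≤ 2 / r := by
      calc R ^ (-(1 + δ)) ≤ R ^ (-1 : ℝ) := Real.rpow_le_rpow_of_exponent_le hR (by linarith)
        _ = 1 / R := by rw [Real.rpow_neg_one, one_div]
        _ ≤ 2 / r := by rw [div_le_div_iff₀ hR0 hr0]; linarith
    have hratio : r ^ 2 / (r ^ 2 - R ^ 2) ≤ r / (r - R) := by
      rw [div_le_div_iff₀ hgap (by linarith)]
      nlinarith [mul_pos hr0 (mul_pos (sub_pos.2 hRr) hR0)]
    calc R ^ (-(1 + δ)) * (r ^ 2 / (r ^ 2 - R ^ 2)) ^ β ≤ 2 / r * (r / (r - R)) ^ β := by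
          gcongr
      _ = 2 * r ^ (β - 1) * (r - R) ^ (-β) := by
          rw [Real.div_rpow hr0.le (by linarith), Real.rpow_sub_one hr0.ne',
            Real.rpow_neg (by linarith)]
          ring
      _ ≤ _ := by
          have : 0 ≤ (4 / 3 : ℝ) ^ β * R ^ (-(1 + δ)) := by positivity
          linarith

theorem lintegral_Ioi_one_rpow_neg_one_sub {δ : ℝ} (hδ : 0 < δ) :
    ∫⁻ x in Ioi (1 : ℝ), ENNReal.ofReal (x ^ (-(1 + δ))) = ENNReal.ofReal (1 / δ) := by
  have hp : -(1 + δ) < -1 := by linarith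
  rw [← ofReal_integral_eq_lintegral_ofReal (integrableOn_Ioi_rpow_of_lt hp one_pos)
    ((ae_restrict_iff' measurableSet_Ioi).2 (ae_of_all _ fun x hx =>
      Real.rpow_nonneg (zero_le_one.trans (le_of_lt hx)) _)),
    integral_Ioi_rpow_of_lt hp one_pos, Real.one_rpow]
  rw [show -(1 + δ) + 1 = -δ by ring, neg_div_neg_eq]

theorem lintegral_Ioo_zero_sub_rpow_neg {β r : ℝ} (hβ : β < 1) (hr : 0 ≤ r) :
    ∫⁻ x in Ioo 0 r, ENNReal.ofReal ((r - x) ^ (-β)) = ENNReal.ofReal (r ^ (1 - β) / (1 - β)) := by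
  have hint : IntervalIntegrable (fun x => (r - x) ^ (-β)) volume 0 r := by
    simpa using ((intervalIntegral.intervalIntegrable_rpow' (r := -β) (a := 0) (b := r)
      (by linarith)).comp_sub_left r).symm
  rw [← ofReal_integral_eq_lintegral_ofReal
    (((intervalIntegrable_iff_integrableOn_Ioo_of_le hr).1 hint))
    ((ae_restrict_iff' measurableSet_Ioo).2 (ae_of_all _ fun x hx =>
      Real.rpow_nonneg (sub_nonneg.2 (le_of_lt hx.2)) _)),
    ← integral_Ioc_eq_integral_Ioo, ← intervalIntegral.integral_of_le hr,
    intervalIntegral.integral_comp_sub_left (fun x => x ^ (-β)), sub_self, sub_zero,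
    integral_rpow (Or.inl (by linarith)), Real.zero_rpow (by linarith)]
  congr 1
  ring_nf

theorem lintegral_Ioo_rpow_neg_mul_ratio_rpow_le {β δ r : ℝ} (hβ0 : 0 ≤ β) (hβ1 : β < 1)
    (hδ : 0 < δ) (hr : 0 < r) :
    ∫⁻ R in Ioo 1 r, ENNReal.ofReal (R ^ (-(1 + δ)) * (r ^ 2 / (r ^ 2 - R ^ 2)) ^ β)
      ≤ ENNReal.ofReal ((4 / 3) ^ β / δ + 2 / (1 - β)) := by
  have hβ1' : 0 < 1 - β := by linarith
  have hnear : Measurable fun R : ℝ => ENNReal.ofReal ((4 / 3) ^ β * R ^ (-(1 + δ))) := by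
    fun_prop
  calc ∫⁻ R in Ioo 1 r, ENNReal.ofReal (R ^ (-(1 + δ)) * (r ^ 2 / (r ^ 2 - R ^ 2)) ^ β)
      ≤ ∫⁻ R in Ioo 1 r, (ENNReal.ofReal ((4 / 3) ^ β * R ^ (-(1 + δ)))
          + ENNReal.ofReal (2 * r ^ (β - 1) * (r - R) ^ (-β))) := by
        refine setLIntegral_mono' measurableSet_Ioo fun R hR => ?_
        have hR0 : 0 ≤ R := zero_le_one.trans (le_of_lt hR.1)
        have hRr : 0 ≤ r - R := sub_nonneg.2 (le_of_lt hR.2)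
        rw [← ENNReal.ofReal_add (by positivity) (by positivity)]
        exact ENNReal.ofReal_le_ofReal (rpow_neg_mul_ratio_rpow_le hβ0 hδ.le (le_of_lt hR.1) hR.2)
    _ = ENNReal.ofReal ((4 / 3) ^ β) * (∫⁻ R in Ioo 1 r, ENNReal.ofReal (R ^ (-(1 + δ))))
          + ENNReal.ofReal (2 * r ^ (β - 1)) *
            ∫⁻ R in Ioo 1 r, ENNReal.ofReal ((r - R) ^ (-β)) := by
        rw [lintegral_add_left hnear, ← lintegral_const_mul' _ _ ENNReal.ofReal_ne_top,
          ← lintegral_const_mul' _ _ ENNReal.ofReal_ne_top]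
        congr 1 <;> refine setLIntegral_congr_fun measurableSet_Ioo fun R _ => ?_ <;>
          rw [ENNReal.ofReal_mul (by positivity)]
    _ ≤ ENNReal.ofReal ((4 / 3) ^ β) * (∫⁻ R in Ioi 1, ENNReal.ofReal (R ^ (-(1 + δ))))
          + ENNReal.ofReal (2 * r ^ (β - 1)) *
            ∫⁻ R in Ioo 0 r, ENNReal.ofReal ((r - R) ^ (-β)) := by
        gcongr
        · exact Ioo_subset_Ioi_self
        · norm_num
    _ = ENNReal.ofReal ((4 / 3) ^ β / δ + 2 / (1 - β)) := by
        rw [lintegral_Ioi_one_rpow_neg_one_sub hδ, lintegral_Ioo_zero_sub_rpow_neg hβ1 hr.le,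
          ← ENNReal.ofReal_mul (by positivity), ← ENNReal.ofReal_mul (by positivity),
          ← ENNReal.ofReal_add (by positivity) (by positivity)]
        congr 1
        have hcancel : r ^ (β - 1) * r ^ (1 - β) = 1 := by
          rw [← Real.rpow_add hr]; simp
        rw [mul_assoc 2, ← mul_div_assoc (r ^ (β - 1)), hcancel]
        ring

theorem rpow_mul_div_eq_div_rpow_mul {α δ R r x : ℝ} (hR : 0 < R) (hRr : R < r) :
    R ^ (-(1 + α + δ)) * (R ^ α * x / (r * (r ^ 2 - R ^ 2) ^ (α / 2)))
      = x / r ^ (1 + α) * (R ^ (-(1 + δ)) * (r ^ 2 / (r ^ 2 - R ^ 2)) ^ (α / 2)) := by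
  have hr : 0 < r := hR.trans hRr
  have hgap : 0 < r ^ 2 - R ^ 2 := by nlinarith
  have hR_exp : R ^ (-(1 + α + δ)) * R ^ α = R ^ (-(1 + δ)) := by
    rw [← Real.rpow_add hR]; ring_nf
  have hr_sq : (r ^ 2) ^ (α / 2) = r ^ α := by
    rw [← Real.rpow_natCast, ← Real.rpow_mul hr.le]; ring_nf
  rw [Real.div_rpow (sq_nonneg r) hgap.le, hr_sq, Real.rpow_add hr, Real.rpow_one, ← hR_exp]
  have : 0 < (r ^ 2 - R ^ 2) ^ (α / 2) := by positivity
  field_simp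

theorem lintegral_Ioo_rpow_mul_div_le {α δ r x : ℝ} (hα0 : 0 ≤ α) (hα2 : α < 2) (hδ : 0 < δ)
    (hr : 1 < r) :
    ∫⁻ R in Ioo 1 r, ENNReal.ofReal (R ^ (-(1 + α + δ))) *
        ENNReal.ofReal (R ^ α * x / (r * (r ^ 2 - R ^ 2) ^ (α / 2)))
      ≤ ENNReal.ofReal ((4 / 3) ^ (α / 2) / δ + 2 / (1 - α / 2)) *
        ENNReal.ofReal (x / r ^ (1 + α)) := by
  calc _ = ∫⁻ R in Ioo 1 r, ENNReal.ofReal (x / r ^ (1 + α)) *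
          ENNReal.ofReal (R ^ (-(1 + δ)) * (r ^ 2 / (r ^ 2 - R ^ 2)) ^ (α / 2)) := by
        refine setLIntegral_congr_fun measurableSet_Ioo fun R hR => ?_
        have hR0 : 0 < R := one_pos.trans hR.1
        have hgap : 0 ≤ r ^ 2 - R ^ 2 := by nlinarith [hR.2]
        rw [← ENNReal.ofReal_mul (Real.rpow_nonneg hR0.le _), ← ENNReal.ofReal_mul' (by positivity),
          rpow_mul_div_eq_div_rpow_mul hR0 hR.2]
    _ = ENNReal.ofReal (x / r ^ (1 + α)) * ∫⁻ R in Ioo 1 r,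
          ENNReal.ofReal (R ^ (-(1 + δ)) * (r ^ 2 / (r ^ 2 - R ^ 2)) ^ (α / 2)) :=
        lintegral_const_mul' _ _ ENNReal.ofReal_ne_top
    _ ≤ ENNReal.ofReal (x / r ^ (1 + α)) *
          ENNReal.ofReal ((4 / 3) ^ (α / 2) / δ + 2 / (1 - α / 2)) := by
        gcongr
        exact lintegral_Ioo_rpow_neg_mul_ratio_rpow_le (by positivity) (by linarith) hδ
          (one_pos.trans hr)
    _ = _ := mul_comm _ _

theorem stmt0_general (α : ℝ) (hα0 : 0 < α) (hα2 : α < 2)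
    (u : ℝ → ℝ) (hmeas : Measurable u)
    (hint : ∫⁻ r in Ioi (1:ℝ), ENNReal.ofReal (u r / r ^ (1 + α)) < ⊤)
    (δ : ℝ) (hδ : 0 < δ) :
    ∫⁻ R in Ioi (1:ℝ), ENNReal.ofReal (R ^ (-(1 + α + δ))) *
      ∫⁻ r in Ioi R, ENNReal.ofReal (R ^ α * u r / (r * (r ^ 2 - R ^ 2) ^ (α / 2))) < ⊤ := by
  set C := (4 / 3) ^ (α / 2) / δ + 2 / (1 - α / 2)
  have hF : Measurable (Function.uncurry fun R r : ℝ => ENNReal.ofReal (R ^ (-(1 + α + δ))) *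
      ENNReal.ofReal (R ^ α * u r / (r * (r ^ 2 - R ^ 2) ^ (α / 2)))) := by
    unfold Function.uncurry
    fun_prop
  calc _ = ∫⁻ R in Ioi (1 : ℝ), ∫⁻ r in Ioi R, ENNReal.ofReal (R ^ (-(1 + α + δ))) *
        ENNReal.ofReal (R ^ α * u r / (r * (r ^ 2 - R ^ 2) ^ (α / 2))) :=
        lintegral_congr fun R => (lintegral_const_mul' _ _ ENNReal.ofReal_ne_top).symm
    _ = ∫⁻ r in Ioi (1 : ℝ), ∫⁻ R in Ioo 1 r, ENNReal.ofReal (R ^ (-(1 + α + δ))) *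
        ENNReal.ofReal (R ^ α * u r / (r * (r ^ 2 - R ^ 2) ^ (α / 2))) :=
        setLIntegral_Ioi_setLIntegral_Ioi_swap hF 1
    _ ≤ ∫⁻ r in Ioi (1 : ℝ), ENNReal.ofReal C * ENNReal.ofReal (u r / r ^ (1 + α)) :=
        setLIntegral_mono' measurableSet_Ioi fun r hr =>
          lintegral_Ioo_rpow_mul_div_le hα0.le hα2 hδ hr
    _ = ENNReal.ofReal C * ∫⁻ r in Ioi (1 : ℝ), ENNReal.ofReal (u r / r ^ (1 + α)) :=
        lintegral_const_mul' _ _ ENNReal.ofReal_ne_top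
    _ < ⊤ := ENNReal.mul_lt_top ENNReal.ofReal_lt_top hint

theorem stmt0 (n : ℕ) (hn : 2 ≤ n) (α : ℝ) (hα0 : 0 < α) (hα2 : α < 2)
    (u : ℝ → ℝ) (hmeas : Measurable u) (hnn : ∀ r, 0 ≤ r → 0 ≤ u r)
    (hint : ∫⁻ r in Ioi (1:ℝ), ENNReal.ofReal (u r / r ^ (1 + α)) < ⊤)
    (δ : ℝ) (hδ : 0 < δ) :
    ∫⁻ R in Ioi (1:ℝ), ENNReal.ofReal (R ^ (-(1 + α + δ))) *
      ∫⁻ r in Ioi R, ENNReal.ofReal (R ^ α * u r / (r * (r ^ 2 - R ^ 2) ^ (α / 2))) < ⊤ :=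
  stmt0_general α hα0 hα2 u hmeas hint δ hδ
end

section
/- Let $n\geq 3$ and let $f:\mathbb{R}^n\to[0,\infty)$ be measurable with $C_0 := \int_{\mathbb{R}^n} \frac{f(z)}{|z|^{n-2}}\,dz \in (0,\infty)$. Then there exists $R_0\geq 3$ such that for every $y$ with $|y|\geq R_0$ and every exponent $\tau\in\{1,2\}$, $\int_{\mathbb{R}^n} \frac{f(z)}{|y-z|^{\tau}}\,dz \;\geq\; \frac{C_0}{2^{\tau+1}\,|y|^{\tau}\,\ln|y|}$. -/
open MeasureTheory Set
open scoped ENNReal NNReal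

theorem stmt13 (n : ℕ) (hn : 3 ≤ n) (f : EuclideanSpace ℝ (Fin n) → ℝ)
    (hmeas : Measurable f) (hnn : ∀ z, 0 ≤ f z)
    (hfin : ∫⁻ z, ENNReal.ofReal (f z / ‖z‖ ^ ((n : ℝ) - 2)) < ⊤)
    (hpos : 0 < ∫⁻ z, ENNReal.ofReal (f z / ‖z‖ ^ ((n : ℝ) - 2))) :
    ∃ R₀ ≥ (3:ℝ), ∀ y : EuclideanSpace ℝ (Fin n), R₀ ≤ ‖y‖ → ∀ τ : ℝ, τ = 1 ∨ τ = 2 →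
      (∫⁻ z, ENNReal.ofReal (f z / ‖z‖ ^ ((n : ℝ) - 2))) /
          ENNReal.ofReal (2 ^ (τ + 1) * ‖y‖ ^ τ * Real.log ‖y‖) ≤
        ∫⁻ z, ENNReal.ofReal (f z / ‖y - z‖ ^ τ) := by
  classical
  haveI : Nonempty (Fin n) := ⟨⟨0, by omega⟩⟩
  set g : EuclideanSpace ℝ (Fin n) → ℝ≥0∞ :=
    fun z => ENNReal.ofReal (f z / ‖z‖ ^ ((n : ℝ) - 2)) with hgdef
  have he0 : (0:ℝ) ≤ (n:ℝ) - 2 := by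
    have : (3:ℝ) ≤ (n:ℝ) := by exact_mod_cast hn
    linarith
  have hgmeas : Measurable g :=
    (hmeas.div ((Real.continuous_rpow_const he0).measurable.comp measurable_norm)).ennreal_ofReal
  set C₀ : ℝ≥0∞ := ∫⁻ z, g z with hC₀
  -- the annuli
  set A : ℕ → Set (EuclideanSpace ℝ (Fin n)) :=
    fun k => {z | 1 / ((k:ℝ) + 1) ≤ ‖z‖} ∩ {z | ‖z‖ ≤ (k:ℝ) + 1} with hAdef
  have hAmono : Monotone A := by
    intro k l hkl z hz
    obtain ⟨h1, h2⟩ := hz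
    have hcast : ((k:ℝ) + 1) ≤ (l:ℝ) + 1 := by
      have : (k:ℝ) ≤ (l:ℝ) := by exact_mod_cast hkl
      linarith
    refine ⟨le_trans (one_div_le_one_div_of_le (by positivity) hcast) h1,
      le_trans h2 hcast⟩
  have hAsub : {(0:EuclideanSpace ℝ (Fin n))}ᶜ ⊆ ⋃ k, A k := by
    intro z hz
    have hz0 : z ≠ 0 := hz
    have hzpos : 0 < ‖z‖ := norm_pos_iff.mpr hz0
    obtain ⟨m, hm⟩ := exists_nat_ge (max ‖z‖ (1 / ‖z‖))
    refine mem_iUnion.mpr ⟨m, ?_, ?_⟩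
    · show 1 / ((m:ℝ) + 1) ≤ ‖z‖
      rw [div_le_iff₀ (by positivity)]
      have h1 : 1 / ‖z‖ ≤ (m:ℝ) + 1 := le_trans (le_max_right _ _) (by linarith)
      calc (1:ℝ) = ‖z‖ * (1 / ‖z‖) := by field_simp
        _ ≤ ‖z‖ * ((m:ℝ) + 1) := mul_le_mul_of_nonneg_left h1 hzpos.le
    · show ‖z‖ ≤ (m:ℝ) + 1
      exact le_trans (le_max_left _ _) (by linarith)
  -- half of the mass lives in some annulus
  have hsup : C₀ ≤ ⨆ k, ∫⁻ z in A k, g z := by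
    rw [← setLIntegral_iUnion_of_directed g hAmono.directed_le]
    have h0 : ∫⁻ z in {(0:EuclideanSpace ℝ (Fin n))}, g z = 0 :=
      setLIntegral_measure_zero _ _ (measure_singleton 0)
    calc C₀ = (∫⁻ z in {(0:EuclideanSpace ℝ (Fin n))}, g z)
          + ∫⁻ z in {(0:EuclideanSpace ℝ (Fin n))}ᶜ, g z := by
          rw [hC₀, ← lintegral_add_compl g (measurableSet_singleton 0)]
      _ = ∫⁻ z in {(0:EuclideanSpace ℝ (Fin n))}ᶜ, g z := by rw [h0, zero_add]
      _ ≤ ∫⁻ z in ⋃ k, A k, g z := lintegral_mono_set hAsub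
  have hhalf : C₀ / 2 < ⨆ k, ∫⁻ z in A k, g z :=
    lt_of_lt_of_le (ENNReal.half_lt_self hpos.ne' hfin.ne) hsup
  obtain ⟨k, hk⟩ := lt_iSup_iff.mp hhalf
  set K : ℝ := (k:ℝ) + 1 with hKdef
  have hK1 : (1:ℝ) ≤ K := by
    have : (0:ℝ) ≤ (k:ℝ) := Nat.cast_nonneg k
    rw [hKdef]; linarith
  set e : ℝ := (n:ℝ) - 2 with hedef
  have he1 : (1:ℝ) ≤ e := by
    have : (3:ℝ) ≤ (n:ℝ) := by exact_mod_cast hn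
    rw [hedef]; linarith
  have hKe1 : (1:ℝ) ≤ K ^ e := Real.one_le_rpow hK1 (by linarith)
  have hKepos : (0:ℝ) < K ^ e := by linarith
  have hKKe : K ≤ K ^ e := by
    calc K = K ^ (1:ℝ) := (Real.rpow_one K).symm
      _ ≤ K ^ e := Real.rpow_le_rpow_of_exponent_le hK1 he1
  refine ⟨max 3 (Real.exp (K ^ e)), le_max_left _ _, ?_⟩
  intro y hy τ hτ
  have hτpos : (0:ℝ) < τ := by rcases hτ with h | h <;> rw [h] <;> norm_num
  have hy3 : (3:ℝ) ≤ ‖y‖ := le_trans (le_max_left _ _) hy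
  have hyexp : Real.exp (K ^ e) ≤ ‖y‖ := le_trans (le_max_right _ _) hy
  have hypos : (0:ℝ) < ‖y‖ := by linarith
  have hexpgt : K ^ e < Real.exp (K ^ e) := by
    have := Real.add_one_le_exp (K ^ e); linarith
  have hylog : K ^ e ≤ Real.log ‖y‖ := by
    rw [Real.le_log_iff_exp_le hypos]; exact hyexp
  have hlogpos : (0:ℝ) < Real.log ‖y‖ := lt_of_lt_of_le hKepos hylog
  have hKy : K < ‖y‖ := by linarith
  have h2τpos : (0:ℝ) < (2:ℝ) ^ τ := Real.rpow_pos_of_pos two_pos τ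
  have hyτpos : (0:ℝ) < ‖y‖ ^ τ := Real.rpow_pos_of_pos hypos τ
  set c : ℝ := (K ^ e * (2:ℝ) ^ τ * ‖y‖ ^ τ)⁻¹ with hcdef
  have hcpos : (0:ℝ) < c := by rw [hcdef]; positivity
  -- pointwise bound on the annulus
  have hpoint : ∀ z ∈ A k, ENNReal.ofReal c * g z ≤
      ENNReal.ofReal (f z / ‖y - z‖ ^ τ) := by
    intro z hz
    obtain ⟨hz1, hz2⟩ := hz
    have hz1' : 1 / K ≤ ‖z‖ := hz1
    have hz2' : ‖z‖ ≤ K := hz2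
    have hznorm : (0:ℝ) < ‖z‖ := lt_of_lt_of_le (by positivity) hz1'
    have hyz : ‖y - z‖ ≤ 2 * ‖y‖ := by
      calc ‖y - z‖ ≤ ‖y‖ + ‖z‖ := norm_sub_le y z
        _ ≤ 2 * ‖y‖ := by linarith
    have hyzpos : (0:ℝ) < ‖y - z‖ := by
      have h := norm_sub_norm_le y z
      linarith
    simp only [hgdef]
    rw [← ENNReal.ofReal_mul hcpos.le]
    apply ENNReal.ofReal_le_ofReal
    have hza : (1:ℝ) ≤ ‖z‖ ^ e * K ^ e := by
      rw [← Real.mul_rpow hznorm.le (by linarith)]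
      apply Real.one_le_rpow _ (by linarith)
      rw [div_le_iff₀ (by linarith : (0:ℝ) < K)] at hz1'
      linarith
    have hyzτ : ‖y - z‖ ^ τ ≤ (2:ℝ) ^ τ * ‖y‖ ^ τ := by
      rw [← Real.mul_rpow (by norm_num) hypos.le]
      exact Real.rpow_le_rpow (norm_nonneg _) hyz hτpos.le
    have hyzτpos : (0:ℝ) < ‖y - z‖ ^ τ := Real.rpow_pos_of_pos hyzpos τ
    have hzepos : (0:ℝ) < ‖z‖ ^ e := Real.rpow_pos_of_pos hznorm e
    have hstep : c / ‖z‖ ^ e ≤ ((2:ℝ) ^ τ * ‖y‖ ^ τ)⁻¹ := by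
      rw [hcdef, div_eq_mul_inv, ← mul_inv]
      apply inv_anti₀ (by positivity)
      nlinarith [mul_le_mul_of_nonneg_left hza
        (le_of_lt (mul_pos h2τpos hyτpos))]
    calc c * (f z / ‖z‖ ^ e) = f z * (c / ‖z‖ ^ e) := by ring
      _ ≤ f z * ((2:ℝ) ^ τ * ‖y‖ ^ τ)⁻¹ := mul_le_mul_of_nonneg_left hstep (hnn z)
      _ = f z / ((2:ℝ) ^ τ * ‖y‖ ^ τ) := (div_eq_mul_inv _ _).symm
      _ ≤ f z / ‖y - z‖ ^ τ :=
          div_le_div_of_nonneg_left (hnn z) hyzτpos hyzτ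
  -- integral lower bound
  have hmeas2 : Measurable fun z : EuclideanSpace ℝ (Fin n) =>
      ENNReal.ofReal (f z / ‖y - z‖ ^ τ) :=
    (hmeas.div ((Real.continuous_rpow_const hτpos.le).measurable.comp
      ((measurable_const.sub measurable_id).norm))).ennreal_ofReal
  have key : ENNReal.ofReal c * (C₀ / 2) ≤
      ∫⁻ z, ENNReal.ofReal (f z / ‖y - z‖ ^ τ) := by
    calc ENNReal.ofReal c * (C₀ / 2)
        ≤ ENNReal.ofReal c * ∫⁻ z in A k, g z := mul_le_mul_right hk.le _
      _ = ∫⁻ z in A k, ENNReal.ofReal c * g z := (lintegral_const_mul _ hgmeas).symm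
      _ ≤ ∫⁻ z in A k, ENNReal.ofReal (f z / ‖y - z‖ ^ τ) :=
          setLIntegral_mono hmeas2 hpoint
      _ ≤ ∫⁻ z, ENNReal.ofReal (f z / ‖y - z‖ ^ τ) :=
          setLIntegral_le_lintegral _ _
  -- the denominator
  set D : ℝ := 2 ^ (τ + 1) * ‖y‖ ^ τ * Real.log ‖y‖ with hDdef
  have hDpos : (0:ℝ) < D := by
    rw [hDdef]
    have : (0:ℝ) < (2:ℝ) ^ (τ + 1) := Real.rpow_pos_of_pos two_pos _
    positivity
  have hcD : (2:ℝ) ≤ c * D := by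
    have hPpos : (0:ℝ) < K ^ e * (2:ℝ) ^ τ * ‖y‖ ^ τ := by positivity
    rw [hcdef, hDdef, inv_mul_eq_div, le_div_iff₀ hPpos]
    have h21 : (2:ℝ) ^ (τ + 1) = (2:ℝ) ^ τ * 2 := Real.rpow_add_one two_ne_zero τ
    rw [h21]
    have hhint := mul_le_mul_of_nonneg_left hylog
      (by positivity : (0:ℝ) ≤ 2 * ((2:ℝ) ^ τ * ‖y‖ ^ τ))
    ring_nf at hhint ⊢
    linarith
  -- final assembly
  rw [ENNReal.div_le_iff_le_mul (Or.inl (by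
        simp only [ne_eq, ENNReal.ofReal_eq_zero, not_le]; exact hDpos))
      (Or.inl ENNReal.ofReal_ne_top)]
  calc C₀ = 2 * (C₀ / 2) := (ENNReal.mul_div_cancel two_ne_zero ENNReal.ofNat_ne_top).symm
    _ ≤ (ENNReal.ofReal c * ENNReal.ofReal D) * (C₀ / 2) := by
        apply mul_le_mul_left
        rw [← ENNReal.ofReal_mul hcpos.le]
        calc (2:ℝ≥0∞) = ENNReal.ofReal 2 := by simp
          _ ≤ ENNReal.ofReal (c * D) := ENNReal.ofReal_le_ofReal hcD
    _ = (ENNReal.ofReal c * (C₀ / 2)) * ENNReal.ofReal D := by ring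
    _ ≤ (∫⁻ z, ENNReal.ofReal (f z / ‖y - z‖ ^ τ)) * ENNReal.ofReal D :=
        mul_le_mul_left key _
end
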